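/- arXiv:2405.03170 — 4 statements merged into one kernel-verified Lean document; each statement's English description precedes it below -/
import Mathlib

section
/- Let G₁ and G₂ be finite groups, let f : G₁ → G₂ be any function, and let ℱ be the set of all group homomorphisms from G₁ to G₂. Suppose ε > 1/4 and f is ε-far from ℱ, i.e. δ(f, ℱ) > ε. Then the probability, over x and z drawn independently and uniformly at random from G₁, that f(x·z) ≠ f(x)·f(z) is at least 2/9. -/
open Finset

private lemma blr_card_mulLeft {G : Type*} [Group G] [Fintype G]
    (a : G) (P : G → Prop) [DecidablePred P] :
    (univ.filter fun x => P (a * x)).card = (univ.filter P).card := by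
  apply Finset.card_bij (fun x _ => a * x)
  · intro x hx; simp only [mem_filter, mem_univ, true_and] at hx ⊢; exact hx
  · intro x _ y _ h; exact mul_left_cancel h
  · intro y hy
    refine ⟨a⁻¹ * y, ?_, by group⟩
    simp only [mem_filter, mem_univ, true_and] at hy ⊢
    rwa [mul_inv_cancel_left]

private lemma blr_card_pair_mulLeft_fst {G : Type*} [Group G] [Fintype G]
    (a : G) (P : G × G → Prop) [DecidablePred P] :
    (univ.filter fun p : G × G => P (a * p.1, p.2)).card = (univ.filter P).card := by
  apply Finset.card_bij (fun p _ => (a * p.1, p.2))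
  · intro p hp; simp only [mem_filter, mem_univ, true_and] at hp ⊢; exact hp
  · intro p _ q _ h
    obtain ⟨h1, h2⟩ := Prod.mk.injEq .. ▸ h
    exact Prod.ext (mul_left_cancel h1) h2
  · intro q hq
    refine ⟨(a⁻¹ * q.1, q.2), ?_, by simp [mul_inv_cancel_left]⟩
    simp only [mem_filter, mem_univ, true_and] at hq ⊢
    rwa [mul_inv_cancel_left]

private lemma blr_filter_prod {α β : Type*} [Fintype α] [Fintype β]
    (P : α → Prop) (Q : β → Prop) [DecidablePred P] [DecidablePred Q] :
    (univ.filter fun p : α × β => P p.1 ∧ Q p.2).card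
      = (univ.filter P).card * (univ.filter Q).card := by
  rw [← card_product]
  congr 1
  ext p
  simp [mem_product, and_assoc, and_left_comm]

private lemma blr_card_shear_fst {G : Type*} [Group G] [Fintype G]
    (P Q : G → Prop) [DecidablePred P] [DecidablePred Q] :
    (univ.filter fun p : G × G => P p.1 ∧ Q (p.1 * p.2)).card
      = (univ.filter P).card * (univ.filter Q).card := by
  rw [← blr_filter_prod P Q]
  apply Finset.card_bij (fun p _ => (p.1, p.1 * p.2))
  · intro p hp; simp only [mem_filter, mem_univ, true_and] at hp ⊢; exact hp
  · intro p _ q _ h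
    obtain ⟨h1, h2⟩ := Prod.mk.injEq .. ▸ h
    exact Prod.ext h1 (by rw [h1] at h2; exact mul_left_cancel h2)
  · intro q hq
    refine ⟨(q.1, q.1⁻¹ * q.2), ?_, by simp [mul_inv_cancel_left]⟩
    simp only [mem_filter, mem_univ, true_and, mul_inv_cancel_left] at hq ⊢
    exact hq

private lemma blr_card_shear_snd {G : Type*} [Group G] [Fintype G]
    (P Q : G → Prop) [DecidablePred P] [DecidablePred Q] :
    (univ.filter fun p : G × G => P p.2 ∧ Q (p.1 * p.2)).card
      = (univ.filter P).card * (univ.filter Q).card := by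
  rw [← blr_filter_prod P Q]
  apply Finset.card_bij (fun p _ => (p.2, p.1 * p.2))
  · intro p hp; simp only [mem_filter, mem_univ, true_and] at hp ⊢; exact hp
  · intro p _ q _ h
    obtain ⟨h1, h2⟩ := Prod.mk.injEq .. ▸ h
    refine Prod.ext ?_ h1
    rw [h1] at h2; exact mul_right_cancel h2
  · intro q hq
    refine ⟨(q.2 * q.1⁻¹, q.1), ?_, by simp [inv_mul_cancel_right]⟩
    simp only [mem_filter, mem_univ, true_and, inv_mul_cancel_right] at hq ⊢
    exact hq

private lemma blr_card_pair_eq_sum {α β : Type*} [Fintype α] [Fintype β] [DecidableEq α]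
    (P : α × β → Prop) [DecidablePred P] :
    (univ.filter P).card = ∑ z : α, (univ.filter fun w => P (z, w)).card := by
  rw [Finset.card_eq_sum_card_fiberwise (f := Prod.fst) (t := univ) (fun p _ => mem_univ p.1)]
  refine Finset.sum_congr rfl fun z _ => ?_
  apply Finset.card_bij (fun p _ => p.2)
  · intro p hp
    simp only [mem_filter, mem_univ, true_and] at hp ⊢
    obtain ⟨h1, h2⟩ := hp
    rw [← h2]
    simpa using h1
  · intro p hp q hq h
    simp only [mem_filter] at hp hq
    exact Prod.ext (hp.2.trans hq.2.symm) h
  · intro w hw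
    simp only [mem_filter, mem_univ, true_and] at hw
    exact ⟨(z, w), by simp [hw], rfl⟩

private lemma blr_card_inter3 {α : Type*} [Fintype α] [DecidableEq α] (s t u : Finset α) :
    s.card + t.card + u.card ≤ (s ∩ t ∩ u).card + 2 * Fintype.card α := by
  have h1 := Finset.card_inter_add_card_union s t
  have h2 := Finset.card_inter_add_card_union (s ∩ t) u
  have h3 : (s ∪ t).card ≤ Fintype.card α := by
    simpa using Finset.card_le_univ (s ∪ t)
  have h4 : ((s ∩ t) ∪ u).card ≤ Fintype.card α := by
    simpa using Finset.card_le_univ ((s ∩ t) ∪ u)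
  omega

set_option maxHeartbeats 1000000 in
/-- BLR linearity test, soundness for `ε > 1/4`: if `f` is `ε`-far from every group
homomorphism `G₁ →* G₂` (that is, `δ(f, ℱ) > ε` where `ℱ` is the set of all homomorphisms),
then the probability over uniform independent `x, z : G₁` that `f (x * z) ≠ f x * f z`
is at least `2/9`. -/
theorem blr_soundness_large_eps {G₁ G₂ : Type*} [Group G₁] [Group G₂]
    [Fintype G₁] [Fintype G₂] [DecidableEq G₂]
    (f : G₁ → G₂) (ε : ℝ) (hε : 1 / 4 < ε)
    (hfar : ∀ g : G₁ →* G₂,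
      ε < ((Finset.univ.filter fun x : G₁ => f x ≠ g x).card : ℝ) / (Fintype.card G₁ : ℝ)) :
    (2 : ℝ) / 9 ≤
      ((Finset.univ.filter fun p : G₁ × G₁ =>
          f (p.1 * p.2) ≠ f p.1 * f p.2).card : ℝ) / ((Fintype.card G₁ : ℝ)) ^ 2 := by
  classical
  by_contra hcon
  push_neg at hcon
  set N := Fintype.card G₁ with hNdef
  set R : Finset (G₁ × G₁) :=
    Finset.univ.filter (fun p : G₁ × G₁ => f (p.1 * p.2) ≠ f p.1 * f p.2) with hRdef
  set r : ℕ := R.card with hrdef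
  have hNpos : 0 < N := Fintype.card_pos
  have hNr : (0:ℝ) < (N:ℝ) := by exact_mod_cast hNpos
  have hr : (r:ℝ) < 2/9 * (N:ℝ)^2 := by
    rw [div_lt_iff₀ (by positivity)] at hcon
    linarith
  -- choose plurality decoding g
  have hgex : ∀ x : G₁, ∃ m : G₂, ∀ a : G₂,
      (univ.filter fun y => f (x*y) * (f y)⁻¹ = a).card
        ≤ (univ.filter fun y => f (x*y) * (f y)⁻¹ = m).card := by
    intro x
    obtain ⟨m, -, hm⟩ := Finset.exists_max_image (univ : Finset G₂)
      (fun a => (univ.filter fun y => f (x*y) * (f y)⁻¹ = a).card) ⟨1, mem_univ 1⟩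
    exact ⟨m, fun a => hm a (mem_univ a)⟩
  choose g hg using hgex
  -- key bound: the plurality is attained on more than 2/3 of points
  have hkey : ∀ x : G₁,
      (2:ℝ)/3 * (N:ℝ) < ((univ.filter fun y => f (x*y) * (f y)⁻¹ = g x).card : ℝ) := by
    intro x
    set k : ℕ := (univ.filter fun y => f (x*y) * (f y)⁻¹ = g x).card with hk
    set S : Finset (G₁ × G₁) := univ.filter
      (fun p : G₁ × G₁ => f (x*(p.1*p.2)) * (f (p.1*p.2))⁻¹ = f (x*p.1) * (f p.1)⁻¹) with hS
    have hkN : k ≤ N := by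
      simpa [hNdef] using Finset.card_le_univ (univ.filter fun y => f (x*y) * (f y)⁻¹ = g x)
    -- (a) lower bound on collisions
    have hT1 : (univ.filter fun p : G₁ × G₁ =>
        f ((x*p.1)*p.2) ≠ f (x*p.1) * f p.2).card = r := by
      have := blr_card_pair_mulLeft_fst x
        (fun p : G₁ × G₁ => f (p.1*p.2) ≠ f p.1 * f p.2)
      simpa [hRdef, hrdef] using this
    have hSlow : N * N ≤ S.card + 2 * r := by
      have hsub : (univ : Finset (G₁ × G₁)) ⊆ S
          ∪ (univ.filter fun p : G₁ × G₁ => f ((x*p.1)*p.2) ≠ f (x*p.1) * f p.2) ∪ R := by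
        intro p _
        by_contra hp
        simp only [mem_union, mem_filter, mem_univ, true_and, not_or, hS, hRdef,
          not_not] at hp
        obtain ⟨⟨h1, h2⟩, h3⟩ := hp
        apply h1
        rw [← mul_assoc, h2, h3]
        group
      have hcard := Finset.card_le_card hsub
      have huniv : (univ : Finset (G₁ × G₁)).card = N * N := by
        simp [hNdef, Fintype.card_prod]
      calc N * N = (univ : Finset (G₁ × G₁)).card := huniv.symm
        _ ≤ _ := hcard
        _ ≤ S.card + (univ.filter fun p : G₁ × G₁ =>
              f ((x*p.1)*p.2) ≠ f (x*p.1) * f p.2).card + R.card := by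
            refine le_trans (Finset.card_union_le _ _) ?_
            exact Nat.add_le_add_right (Finset.card_union_le _ _) _
        _ = S.card + 2 * r := by rw [hT1]; omega
    -- (b) collision count ≤ N * k
    have hSup1 : S.card ≤ N * k := by
      have hsum := blr_card_pair_eq_sum
        (fun p : G₁ × G₁ => f (x*(p.1*p.2)) * (f (p.1*p.2))⁻¹ = f (x*p.1) * (f p.1)⁻¹)
      have : S.card = ∑ z : G₁,
          (univ.filter fun w => f (x*(z*w)) * (f (z*w))⁻¹ = f (x*z) * (f z)⁻¹).card := by
        simpa [hS] using hsum
      rw [this]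
      have hterm : ∀ z : G₁,
          (univ.filter fun w => f (x*(z*w)) * (f (z*w))⁻¹ = f (x*z) * (f z)⁻¹).card ≤ k := by
        intro z
        have hb := blr_card_mulLeft z
          (fun u => f (x*u) * (f u)⁻¹ = f (x*z) * (f z)⁻¹)
        calc (univ.filter fun w => f (x*(z*w)) * (f (z*w))⁻¹ = f (x*z) * (f z)⁻¹).card
            = (univ.filter fun u => f (x*u) * (f u)⁻¹ = f (x*z) * (f z)⁻¹).card := by
              simpa using hb
          _ ≤ k := hg x _
      calc ∑ z : G₁, (univ.filter fun w =>
              f (x*(z*w)) * (f (z*w))⁻¹ = f (x*z) * (f z)⁻¹).card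
          ≤ ∑ _z : G₁, k := Finset.sum_le_sum fun z _ => hterm z
        _ = N * k := by simp [hNdef, mul_comm]
    -- (c) collision count ≤ k² + (N-k)²
    have hSup2 : S.card ≤ k * k + (N - k) * (N - k) := by
      have hU1 : (univ.filter fun p : G₁ × G₁ =>
          (f (x*p.1) * (f p.1)⁻¹ = g x) ∧ f (x*(p.1*p.2)) * (f (p.1*p.2))⁻¹ = g x).card
            = k * k := by
        have := blr_card_shear_fst (fun u => f (x*u) * (f u)⁻¹ = g x)
          (fun u => f (x*u) * (f u)⁻¹ = g x)
        simpa [hk] using this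
      have hnotcard : (univ.filter fun u : G₁ => ¬ (f (x*u) * (f u)⁻¹ = g x)).card = N - k := by
        rw [Finset.filter_not, Finset.card_sdiff_of_subset (Finset.filter_subset _ _)]
        simp [hNdef, hk]
      have hU2 : (univ.filter fun p : G₁ × G₁ =>
          (¬ (f (x*p.1) * (f p.1)⁻¹ = g x)) ∧
            ¬ (f (x*(p.1*p.2)) * (f (p.1*p.2))⁻¹ = g x)).card = (N - k) * (N - k) := by
        have := blr_card_shear_fst (fun u => ¬ (f (x*u) * (f u)⁻¹ = g x))
          (fun u => ¬ (f (x*u) * (f u)⁻¹ = g x))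
        rw [hnotcard] at this
        simpa using this
      have hsub : S ⊆ (univ.filter fun p : G₁ × G₁ =>
          (f (x*p.1) * (f p.1)⁻¹ = g x) ∧ f (x*(p.1*p.2)) * (f (p.1*p.2))⁻¹ = g x)
          ∪ (univ.filter fun p : G₁ × G₁ =>
          (¬ (f (x*p.1) * (f p.1)⁻¹ = g x)) ∧
            ¬ (f (x*(p.1*p.2)) * (f (p.1*p.2))⁻¹ = g x)) := by
        intro p hp
        simp only [hS, mem_filter, mem_univ, true_and] at hp
        simp only [mem_union, mem_filter, mem_univ, true_and]
        by_cases hc : f (x*p.1) * (f p.1)⁻¹ = g x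
        · exact Or.inl ⟨hc, hp.trans hc⟩
        · exact Or.inr ⟨hc, fun hd => hc (hp ▸ hd)⟩
      calc S.card ≤ _ := Finset.card_le_card hsub
        _ ≤ k * k + (N - k) * (N - k) := by
          refine le_trans (Finset.card_union_le _ _) ?_
          rw [hU1, hU2]
    -- now real arithmetic
    have hn1 : N * N ≤ N * k + 2 * r := le_trans hSlow (by omega)
    have hn2 : N * N ≤ k * k + (N - k) * (N - k) + 2 * r := le_trans hSlow (by omega)
    have h1 : ((N:ℝ)) * N ≤ (N:ℝ) * k + 2 * r := by exact_mod_cast hn1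
    have h2 : ((N:ℝ)) * N ≤ (k:ℝ) * k + ((N:ℝ) - k) * ((N:ℝ) - k) + 2 * r := by
      have h2' := hn2
      zify [hkN] at h2'
      exact_mod_cast h2'
    by_contra hKc
    push_neg at hKc
    have h5 : 5/9 * (N:ℝ)^2 < (N:ℝ) * k := by nlinarith [h1, hr]
    have hK3 : (N:ℝ)/3 < (k:ℝ) := by nlinarith [h5, hNr]
    nlinarith [h2, hr, mul_nonneg (sub_nonneg.2 hKc) (le_of_lt (sub_pos.2 hK3))]
  -- g is a homomorphism
  have hhom : ∀ a b : G₁, g (a * b) = g a * g b := by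
    intro a b
    set s : Finset G₁ := univ.filter fun z => f (b*z) * (f z)⁻¹ = g b with hs
    set t : Finset G₁ := univ.filter fun z => f (a*(b*z)) * (f (b*z))⁻¹ = g a with ht
    set u : Finset G₁ := univ.filter fun z => f ((a*b)*z) * (f z)⁻¹ = g (a*b) with hu
    have hts : t.card = (univ.filter fun y => f (a*y) * (f y)⁻¹ = g a).card := by
      have := blr_card_mulLeft b (fun w => f (a*w) * (f w)⁻¹ = g a)
      simpa [ht] using this
    have hscard : (2:ℝ)/3 * (N:ℝ) < (s.card : ℝ) := hkey b
    have htcard : (2:ℝ)/3 * (N:ℝ) < (t.card : ℝ) := by rw [hts]; exact_mod_cast hkey a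
    have hucard : (2:ℝ)/3 * (N:ℝ) < (u.card : ℝ) := hkey (a*b)
    have hsum : 2 * N < s.card + t.card + u.card := by
      have : 2 * (N:ℝ) < (s.card : ℝ) + t.card + u.card := by linarith
      exact_mod_cast this
    have hint := blr_card_inter3 s t u
    rw [← hNdef] at hint
    have hpos : 0 < (s ∩ t ∩ u).card := by omega
    obtain ⟨z, hz⟩ := Finset.card_pos.mp hpos
    simp only [mem_inter, hs, ht, hu, mem_filter, mem_univ, true_and] at hz
    obtain ⟨⟨hzs, hzt⟩, hzu⟩ := hz
    rw [← hzu, ← hzs, ← hzt, mul_assoc a b z]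
    group
  set G : G₁ →* G₂ := MonoidHom.mk' g hhom with hG
  have hgB := hfar G
  set B : Finset G₁ := univ.filter fun x => f x ≠ g x with hB
  have hBB : (univ.filter fun x : G₁ => f x ≠ G x) = B := by
    ext x
    simp [hG, hB, MonoidHom.mk', OneHom.coe_mk]
  rw [hBB] at hgB
  set b : ℕ := B.card with hbdef
  -- step 5: r is large vs b
  have hrb : (2:ℝ)/3 * (N:ℝ) * (b:ℝ) ≤ (r:ℝ) := by
    have hrsum : r = ∑ x : G₁, (univ.filter fun y => f (x*y) ≠ f x * f y).card := by
      have := blr_card_pair_eq_sum (fun p : G₁ × G₁ => f (p.1*p.2) ≠ f p.1 * f p.2)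
      simpa [hrdef, hRdef] using this
    have hfib : ∀ x ∈ B, (univ.filter fun y => f (x*y) * (f y)⁻¹ = g x).card
        ≤ (univ.filter fun y => f (x*y) ≠ f x * f y).card := by
      intro x hx
      simp only [hB, mem_filter, mem_univ, true_and] at hx
      apply Finset.card_le_card
      intro y hy
      simp only [mem_filter, mem_univ, true_and] at hy ⊢
      intro hcontra
      apply hx
      have : f (x*y) * (f y)⁻¹ = f x := by rw [hcontra]; group
      rw [← hy, this]
    have h1 : ∑ x ∈ B, ((2:ℝ)/3 * (N:ℝ)) ≤ ∑ x ∈ B, ((univ.filter fun y => f (x*y) ≠ f x * f y).card : ℝ) :=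
      Finset.sum_le_sum fun x hx => le_trans (le_of_lt (hkey x))
        (by exact_mod_cast hfib x hx)
    have h2 : ∑ x ∈ B, ((univ.filter fun y => f (x*y) ≠ f x * f y).card : ℝ) ≤ (r:ℝ) := by
      rw [hrsum]
      push_cast
      exact Finset.sum_le_sum_of_subset_of_nonneg (Finset.subset_univ B)
        (fun i _ _ => by positivity)
    calc (2:ℝ)/3 * (N:ℝ) * (b:ℝ) = ∑ x ∈ B, ((2:ℝ)/3 * (N:ℝ)) := by
          rw [Finset.sum_const, ← hbdef, nsmul_eq_mul]; ring
      _ ≤ _ := le_trans h1 h2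
  -- step 7: counting lemma r ≥ 3 b N - 6 b²
  have hcount : 3 * (b * N) ≤ r + 6 * (b * b) := by
    have c1 : (univ.filter fun p : G₁ × G₁ => f p.1 ≠ g p.1).card = b * N := by
      have := blr_filter_prod (fun x : G₁ => f x ≠ g x) (fun _ : G₁ => True)
      simpa [hB, ← hbdef, hNdef] using this
    have c2 : (univ.filter fun p : G₁ × G₁ => f p.2 ≠ g p.2).card = N * b := by
      have := blr_filter_prod (fun _ : G₁ => True) (fun x : G₁ => f x ≠ g x)
      simpa [hB, ← hbdef, hNdef] using this
    have c3 : (univ.filter fun p : G₁ × G₁ => f (p.1*p.2) ≠ g (p.1*p.2)).card = N * b := by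
      have := blr_card_shear_fst (fun _ : G₁ => True) (fun x : G₁ => f x ≠ g x)
      simpa [hB, ← hbdef, hNdef] using this
    have c12 : (univ.filter fun p : G₁ × G₁ => f p.1 ≠ g p.1 ∧ f p.2 ≠ g p.2).card = b * b := by
      have := blr_filter_prod (fun x : G₁ => f x ≠ g x) (fun x : G₁ => f x ≠ g x)
      simpa [hB, ← hbdef] using this
    have c13 : (univ.filter fun p : G₁ × G₁ =>
        f p.1 ≠ g p.1 ∧ f (p.1*p.2) ≠ g (p.1*p.2)).card = b * b := by
      have := blr_card_shear_fst (fun x : G₁ => f x ≠ g x) (fun x : G₁ => f x ≠ g x)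
      simpa [hB, ← hbdef] using this
    have c23 : (univ.filter fun p : G₁ × G₁ =>
        f p.2 ≠ g p.2 ∧ f (p.1*p.2) ≠ g (p.1*p.2)).card = b * b := by
      have := blr_card_shear_snd (fun x : G₁ => f x ≠ g x) (fun x : G₁ => f x ≠ g x)
      simpa [hB, ← hbdef] using this
    set E₁ : Finset (G₁ × G₁) := univ.filter
      (fun p => f p.1 ≠ g p.1 ∧ f p.2 = g p.2 ∧ f (p.1*p.2) = g (p.1*p.2)) with hE1
    set E₂ : Finset (G₁ × G₁) := univ.filter
      (fun p => f p.1 = g p.1 ∧ f p.2 ≠ g p.2 ∧ f (p.1*p.2) = g (p.1*p.2)) with hE2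
    set E₃ : Finset (G₁ × G₁) := univ.filter
      (fun p => f p.1 = g p.1 ∧ f p.2 = g p.2 ∧ f (p.1*p.2) ≠ g (p.1*p.2)) with hE3
    have cover1 : b * N ≤ E₁.card + (b * b + b * b) := by
      have hle : (univ.filter fun p : G₁ × G₁ => f p.1 ≠ g p.1).card ≤ E₁.card
          + ((univ.filter fun p : G₁ × G₁ => f p.1 ≠ g p.1 ∧ f p.2 ≠ g p.2).card
            + (univ.filter fun p : G₁ × G₁ =>
                f p.1 ≠ g p.1 ∧ f (p.1*p.2) ≠ g (p.1*p.2)).card) := by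
        refine le_trans (Finset.card_le_card ?_) (le_trans (Finset.card_union_le _ _)
          (Nat.add_le_add_left (Finset.card_union_le _ _) _))
        intro p hp
        simp only [hE1, mem_union, mem_filter, mem_univ, true_and] at hp ⊢
        tauto
      rw [c1, c12, c13] at hle
      exact hle
    have cover2 : N * b ≤ E₂.card + (b * b + b * b) := by
      have hle : (univ.filter fun p : G₁ × G₁ => f p.2 ≠ g p.2).card ≤ E₂.card
          + ((univ.filter fun p : G₁ × G₁ => f p.1 ≠ g p.1 ∧ f p.2 ≠ g p.2).card
            + (univ.filter fun p : G₁ × G₁ =>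
                f p.2 ≠ g p.2 ∧ f (p.1*p.2) ≠ g (p.1*p.2)).card) := by
        refine le_trans (Finset.card_le_card ?_) (le_trans (Finset.card_union_le _ _)
          (Nat.add_le_add_left (Finset.card_union_le _ _) _))
        intro p hp
        simp only [hE2, mem_union, mem_filter, mem_univ, true_and] at hp ⊢
        tauto
      rw [c2, c12, c23] at hle
      exact hle
    have cover3 : N * b ≤ E₃.card + (b * b + b * b) := by
      have hle : (univ.filter fun p : G₁ × G₁ => f (p.1*p.2) ≠ g (p.1*p.2)).card ≤ E₃.card
          + ((univ.filter fun p : G₁ × G₁ =>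
                f p.1 ≠ g p.1 ∧ f (p.1*p.2) ≠ g (p.1*p.2)).card
            + (univ.filter fun p : G₁ × G₁ =>
                f p.2 ≠ g p.2 ∧ f (p.1*p.2) ≠ g (p.1*p.2)).card) := by
        refine le_trans (Finset.card_le_card ?_) (le_trans (Finset.card_union_le _ _)
          (Nat.add_le_add_left (Finset.card_union_le _ _) _))
        intro p hp
        simp only [hE3, mem_union, mem_filter, mem_univ, true_and] at hp ⊢
        tauto
      rw [c3, c13, c23] at hle
      exact hle
    have hE1R : E₁ ⊆ R := by
      intro p hp
      simp only [hE1, hRdef, mem_filter, mem_univ, true_and] at hp ⊢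
      obtain ⟨hx, hy, hxy⟩ := hp
      intro hcon2
      apply hx
      have : f p.1 * f p.2 = g p.1 * f p.2 := by
        rw [← hcon2, hxy, hhom, hy]
      exact mul_right_cancel this
    have hE2R : E₂ ⊆ R := by
      intro p hp
      simp only [hE2, hRdef, mem_filter, mem_univ, true_and] at hp ⊢
      obtain ⟨hx, hy, hxy⟩ := hp
      intro hcon2
      apply hy
      have : f p.1 * f p.2 = f p.1 * g p.2 := by
        rw [← hcon2, hxy, hhom, hx]
      exact mul_left_cancel this
    have hE3R : E₃ ⊆ R := by
      intro p hp
      simp only [hE3, hRdef, mem_filter, mem_univ, true_and] at hp ⊢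
      obtain ⟨hx, hy, hxy⟩ := hp
      rw [hhom, ← hx, ← hy] at hxy
      exact hxy
    have hd12 : Disjoint E₁ E₂ := by
      rw [Finset.disjoint_left]
      intro p hp hq
      simp only [hE1, hE2, mem_filter, mem_univ, true_and] at hp hq
      tauto
    have hd3 : Disjoint (E₁ ∪ E₂) E₃ := by
      rw [Finset.disjoint_left]
      intro p hp hq
      simp only [hE1, hE2, hE3, mem_union, mem_filter, mem_univ, true_and] at hp hq
      tauto
    have hsum3 : E₁.card + E₂.card + E₃.card ≤ r := by
      rw [← Finset.card_union_of_disjoint hd12, ← Finset.card_union_of_disjoint hd3]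
      exact Finset.card_le_card
        (Finset.union_subset (Finset.union_subset hE1R hE2R) hE3R)
    have hmc : N * b = b * N := Nat.mul_comm N b
    linarith [cover1, cover2, cover3, hsum3, hmc]
  -- final contradiction
  have hbN : (1:ℝ)/4 * (N:ℝ) < (b:ℝ) := by
    have := lt_trans hε hgB
    rw [lt_div_iff₀ hNr] at this
    linarith
  have hcountR : 3 * ((b:ℝ) * N) ≤ (r:ℝ) + 6 * ((b:ℝ) * b) := by exact_mod_cast hcount
  have h3b : 3 * (b:ℝ) < (N:ℝ) := by nlinarith [hrb, hr, hNr, hbN]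
  nlinarith [hcountR, hr, hbN, h3b, hNr, mul_pos hNr hNr,
    mul_nonneg (le_of_lt (sub_pos.2 h3b)) (by linarith : (0:ℝ) ≤ 4 * (b:ℝ) - (N:ℝ))]
end

section
/- Let G₁ and G₂ be finite groups, let f : G₁ → G₂ be any function, and let ℱ be the set of all group homomorphisms from G₁ to G₂. Fix 0 < ε ≤ 1 and a natural number n with n ≥ 5/ε, and run n independent BLR linearity tests, each drawing its pair (x, z) independently and uniformly from G₁ × G₁. If f is a group homomorphism, then all n tests pass with probability 1. If f is ε-far from ℱ (i.e. δ(f, ℱ) > ε), then with probability at least 2/3 at least one of the n tests fails. -/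
section Helpers
open Finset

private lemma filter_comp_equiv_card {α : Type*} [Fintype α] (e : Equiv.Perm α)
    (p : α → Prop) [DecidablePred p] :
    (univ.filter fun a => p (e a)).card = (univ.filter p).card := by
  apply Finset.card_nbij e
  · intro a ha; simp only [mem_coe, mem_filter, mem_univ, true_and] at ha ⊢; exact ha
  · exact e.injective.injOn
  · intro b hb
    simp only [Set.mem_image, mem_coe, mem_filter, mem_univ, true_and] at hb ⊢
    exact ⟨e.symm b, by simpa using hb, e.apply_symm_apply b⟩

section Core

variable {G₁ G₂ : Type*} [Group G₁] [Group G₂] [Fintype G₁] [Fintype G₂] [DecidableEq G₂]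

private def cnt (f : G₁ → G₂) (x : G₁) (a : G₂) : ℕ :=
  (univ.filter fun y => f (x * y) * (f y)⁻¹ = a).card

private noncomputable def maj (f : G₁ → G₂) (x : G₁) : G₂ :=
  (Finset.exists_max_image univ (cnt f x) ⟨1, mem_univ 1⟩).choose

private lemma maj_spec (f : G₁ → G₂) (x : G₁) (b : G₂) : cnt f x b ≤ cnt f x (maj f x) :=
  (Finset.exists_max_image univ (cnt f x) ⟨1, mem_univ 1⟩).choose_spec.2 b (mem_univ b)

-- the equivalence (y,z) ↦ (x*y, y⁻¹*z)
private def shiftEquiv (x : G₁) : Equiv.Perm (G₁ × G₁) where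
  toFun p := (x * p.1, p.1⁻¹ * p.2)
  invFun q := (x⁻¹ * q.1, x⁻¹ * q.1 * q.2)
  left_inv p := by ext <;> simp [mul_assoc]
  right_inv q := by ext <;> simp [mul_assoc]

private lemma cnt_sum_lower (f : G₁ → G₂) (x : G₁)
    (hB : ((univ.filter fun p : G₁ × G₁ => f (p.1 * p.2) ≠ f p.1 * f p.2).card : ℝ)
      < 2 / 9 * (Fintype.card G₁ : ℝ) ^ 2) :
    2 / 3 * (Fintype.card G₁ : ℝ) < (cnt f x (maj f x) : ℝ) := by
  classical
  set N := Fintype.card G₁ with hN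
  set B := (univ.filter fun p : G₁ × G₁ => f (p.1 * p.2) ≠ f p.1 * f p.2).card with hBdef
  have hN0 : 0 < (N : ℝ) := by exact_mod_cast Fintype.card_pos
  set m := cnt f x (maj f x) with hm
  set C := (univ.filter fun p : G₁ × G₁ =>
    f (x * p.1) * (f p.1)⁻¹ = f (x * p.2) * (f p.2)⁻¹) with hC
  -- complement of C has card ≤ 2B
  have hcompl : (univ.filter fun p : G₁ × G₁ =>
      ¬(f (x * p.1) * (f p.1)⁻¹ = f (x * p.2) * (f p.2)⁻¹)).card ≤ 2 * B := by
    have hsub : (univ.filter fun p : G₁ × G₁ =>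
        ¬(f (x * p.1) * (f p.1)⁻¹ = f (x * p.2) * (f p.2)⁻¹)) ⊆
        (univ.filter fun p : G₁ × G₁ =>
          f ((x * p.1) * (p.1⁻¹ * p.2)) ≠ f (x * p.1) * f (p.1⁻¹ * p.2)) ∪
        (univ.filter fun p : G₁ × G₁ =>
          f (p.1 * (p.1⁻¹ * p.2)) ≠ f p.1 * f (p.1⁻¹ * p.2)) := by
      intro p hp
      simp only [mem_filter, mem_univ, true_and] at hp
      simp only [mem_union, mem_filter, mem_univ, true_and]
      by_contra hcon
      push_neg at hcon
      obtain ⟨h1, h2⟩ := hcon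
      apply hp
      have e1 : (x * p.1) * (p.1⁻¹ * p.2) = x * p.2 := by group
      have e2 : p.1 * (p.1⁻¹ * p.2) = p.2 := by group
      rw [e1] at h1; rw [e2] at h2
      rw [h1, h2]; group
    calc _ ≤ _ := card_le_card hsub
      _ ≤ (univ.filter fun p : G₁ × G₁ =>
            f ((x * p.1) * (p.1⁻¹ * p.2)) ≠ f (x * p.1) * f (p.1⁻¹ * p.2)).card +
          (univ.filter fun p : G₁ × G₁ =>
            f (p.1 * (p.1⁻¹ * p.2)) ≠ f p.1 * f (p.1⁻¹ * p.2)).card := card_union_le _ _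
      _ = 2 * B := by
          have h1 : (univ.filter fun p : G₁ × G₁ =>
              f ((x * p.1) * (p.1⁻¹ * p.2)) ≠ f (x * p.1) * f (p.1⁻¹ * p.2)).card = B :=
            filter_comp_equiv_card (shiftEquiv x)
              (fun q : G₁ × G₁ => f (q.1 * q.2) ≠ f q.1 * f q.2)
          have h2 : (univ.filter fun p : G₁ × G₁ =>
              f (p.1 * (p.1⁻¹ * p.2)) ≠ f p.1 * f (p.1⁻¹ * p.2)).card = B :=
            by
              have := filter_comp_equiv_card (shiftEquiv (1 : G₁))
                (fun q : G₁ × G₁ => f (q.1 * q.2) ≠ f q.1 * f q.2)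
              simpa [shiftEquiv] using this
          rw [h1, h2]; ring
  -- C.card ≥ N^2 - 2B
  have hsplitC := Finset.card_filter_add_card_filter_not
    (s := (univ : Finset (G₁ × G₁)))
    (fun p : G₁ × G₁ => f (x * p.1) * (f p.1)⁻¹ = f (x * p.2) * (f p.2)⁻¹)
  have hcardU : (univ : Finset (G₁ × G₁)).card = N * N := by
    simp [Finset.card_univ, Fintype.card_prod, hN]
  have hClower : (N : ℝ) * N - 2 * B ≤ (C.card : ℝ) := by
    have : C.card + (univ.filter fun p : G₁ × G₁ =>
        ¬(f (x * p.1) * (f p.1)⁻¹ = f (x * p.2) * (f p.2)⁻¹)).card = N * N := by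
      rw [← hcardU]; exact hsplitC
    have h2B : ((univ.filter fun p : G₁ × G₁ =>
        ¬(f (x * p.1) * (f p.1)⁻¹ = f (x * p.2) * (f p.2)⁻¹)).card : ℝ) ≤ 2 * B := by
      exact_mod_cast hcompl
    have := congrArg (fun k : ℕ => (k : ℝ)) this
    push_cast at this
    linarith
  -- C.card ≤ m^2 + (N-m)^2  (structure bound)
  set F := (univ.filter fun y : G₁ => f (x * y) * (f y)⁻¹ = maj f x) with hF
  set Fc := (univ.filter fun y : G₁ => ¬(f (x * y) * (f y)⁻¹ = maj f x)) with hFc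
  have hFcard : F.card = m := rfl
  have hsplitF : m + Fc.card = N := by
    have := Finset.card_filter_add_card_filter_not
      (s := (univ : Finset G₁)) (fun y : G₁ => f (x * y) * (f y)⁻¹ = maj f x)
    simp only [Finset.card_univ] at this
    exact this
  have hCupper : C.card ≤ m * m + Fc.card * Fc.card := by
    have hsub : C ⊆ F ×ˢ F ∪ Fc ×ˢ Fc := by
      intro p hp
      simp only [hC, mem_filter, mem_univ, true_and] at hp
      simp only [mem_union, mem_product, hF, hFc, mem_filter, mem_univ, true_and]
      by_cases hcase : f (x * p.1) * (f p.1)⁻¹ = maj f x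
      · exact Or.inl ⟨hcase, by rw [← hp]; exact hcase⟩
      · exact Or.inr ⟨hcase, by rw [← hp]; exact hcase⟩
    calc C.card ≤ (F ×ˢ F ∪ Fc ×ˢ Fc).card := card_le_card hsub
      _ ≤ (F ×ˢ F).card + (Fc ×ˢ Fc).card := card_union_le _ _
      _ = m * m + Fc.card * Fc.card := by rw [card_product, card_product, hFcard]
  -- C.card ≤ N * m  (row bound)
  have hCrow : C.card ≤ N * m := by
    have hfib : C.card = ∑ y : G₁, (C.filter fun p => p.1 = y).card :=
      Finset.card_eq_sum_card_fiberwise (fun p _ => mem_univ p.1)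
    rw [hfib]
    calc ∑ y : G₁, (C.filter fun p => p.1 = y).card ≤ ∑ _y : G₁, m := by
          apply Finset.sum_le_sum
          intro y _
          have : (C.filter fun p => p.1 = y).card ≤
              (univ.filter fun z : G₁ => f (x * z) * (f z)⁻¹ = f (x * y) * (f y)⁻¹).card := by
            apply Finset.card_le_card_of_injOn (fun p => p.2)
            · intro p hp
              simp only [hC, mem_coe, mem_filter, mem_univ, true_and] at hp ⊢
              obtain ⟨hpc, hp1⟩ := hp
              rw [← hp1]; exact hpc.symm
            · intro p hp q hq hpq
              simp only [mem_coe, mem_filter] at hp hq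
              have : p.1 = q.1 := hp.2.trans hq.2.symm
              exact Prod.ext this hpq
          exact this.trans (maj_spec f x _)
      _ = N * m := by simp [hN, Finset.card_univ, mul_comm]
  -- combine
  have hm_le : m ≤ N := by
    rw [hm]; unfold cnt
    calc _ ≤ (univ : Finset G₁).card := card_le_card (filter_subset _ _)
      _ = N := by simp [hN]
  have h1 : ((m : ℝ)) * m + ((N : ℝ) - m) * ((N : ℝ) - m) ≥ (N : ℝ) * N - 2 * B := by
    have hcast : (Fc.card : ℝ) = (N : ℝ) - m := by
      have := congrArg (fun k : ℕ => (k : ℝ)) hsplitF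
      push_cast at this; linarith
    have := hCupper
    have hc : (C.card : ℝ) ≤ (m : ℝ) * m + (Fc.card : ℝ) * Fc.card := by exact_mod_cast this
    rw [hcast] at hc
    linarith
  have h2 : (N : ℝ) * N - 2 * B ≤ (N : ℝ) * m := by
    have : (C.card : ℝ) ≤ (N : ℝ) * m := by exact_mod_cast hCrow
    linarith
  have hmN : (m : ℝ) ≤ N := by exact_mod_cast hm_le
  -- from h2 and hB : m > 5/9 N ; with h1 conclude m > 2/3 N
  have hBle : (B : ℝ) < 2 / 9 * (N : ℝ) ^ 2 := hB
  nlinarith [sq_nonneg ((N : ℝ) - m), sq_nonneg ((m : ℝ) - 2 / 3 * N),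
    mul_pos hN0 hN0, sq_nonneg ((m : ℝ) - N / 3)]


private lemma maj_mul (f : G₁ → G₂)
    (hB : ((univ.filter fun p : G₁ × G₁ => f (p.1 * p.2) ≠ f p.1 * f p.2).card : ℝ)
      < 2 / 9 * (Fintype.card G₁ : ℝ) ^ 2) (x y : G₁) :
    maj f (x * y) = maj f x * maj f y := by
  classical
  set N := Fintype.card G₁ with hN
  have hN0 : 0 < (N : ℝ) := by exact_mod_cast Fintype.card_pos
  have hmx := cnt_sum_lower f x hB
  have hmy := cnt_sum_lower f y hB
  have hmxy := cnt_sum_lower f (x * y) hB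
  -- three "good" sets over z
  set U₁ := (univ.filter fun z : G₁ => ¬(f (y * z) * (f z)⁻¹ = maj f y)) with hU₁
  set U₂ := (univ.filter fun z : G₁ => ¬(f (x * (y * z)) * (f (y * z))⁻¹ = maj f x)) with hU₂
  set U₃ := (univ.filter fun z : G₁ => ¬(f ((x * y) * z) * (f z)⁻¹ = maj f (x * y))) with hU₃
  have hU₁c : (U₁.card : ℝ) = (N : ℝ) - cnt f y (maj f y) := by
    have := Finset.card_filter_add_card_filter_not
      (s := (univ : Finset G₁)) (fun z : G₁ => f (y * z) * (f z)⁻¹ = maj f y)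
    have h2 : cnt f y (maj f y) + U₁.card = N := by
      simpa [hN, Finset.card_univ, cnt, hU₁] using this
    have := congrArg (fun k : ℕ => (k : ℝ)) h2
    push_cast at this; linarith
  have hU₂c : (U₂.card : ℝ) = (N : ℝ) - cnt f x (maj f x) := by
    have hbij : (univ.filter fun z : G₁ => ¬(f (x * (y * z)) * (f (y * z))⁻¹ = maj f x)).card
        = (univ.filter fun z : G₁ => ¬(f (x * z) * (f z)⁻¹ = maj f x)).card := by
      exact filter_comp_equiv_card (Equiv.mulLeft y)
        (fun z : G₁ => ¬(f (x * z) * (f z)⁻¹ = maj f x))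
    have := Finset.card_filter_add_card_filter_not
      (s := (univ : Finset G₁)) (fun z : G₁ => f (x * z) * (f z)⁻¹ = maj f x)
    have h2 : cnt f x (maj f x) +
        (univ.filter fun z : G₁ => ¬(f (x * z) * (f z)⁻¹ = maj f x)).card = N := by
      simpa [hN, Finset.card_univ, cnt] using this
    have h3 : U₂.card = (univ.filter fun z : G₁ => ¬(f (x * z) * (f z)⁻¹ = maj f x)).card := hbij
    have := congrArg (fun k : ℕ => (k : ℝ)) h2
    rw [h3]
    push_cast at this ⊢; linarith
  have hU₃c : (U₃.card : ℝ) = (N : ℝ) - cnt f (x * y) (maj f (x * y)) := by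
    have := Finset.card_filter_add_card_filter_not
      (s := (univ : Finset G₁)) (fun z : G₁ => f ((x * y) * z) * (f z)⁻¹ = maj f (x * y))
    have h2 : cnt f (x * y) (maj f (x * y)) + U₃.card = N := by
      simpa [hN, Finset.card_univ, cnt, hU₃] using this
    have := congrArg (fun k : ℕ => (k : ℝ)) h2
    push_cast at this; linarith
  -- there is a z outside all three
  have hex : ∃ z : G₁, z ∉ U₁ ∧ z ∉ U₂ ∧ z ∉ U₃ := by
    by_contra hcon
    push_neg at hcon
    have hsub : (univ : Finset G₁) ⊆ U₁ ∪ U₂ ∪ U₃ := by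
      intro z _
      rcases Decidable.em (z ∈ U₁) with h | h
      · exact mem_union_left _ (mem_union_left _ h)
      rcases Decidable.em (z ∈ U₂) with h' | h'
      · exact mem_union_left _ (mem_union_right _ h')
      · exact mem_union_right _ (hcon z h h')
    have hcard : (N : ℝ) ≤ (U₁.card : ℝ) + U₂.card + U₃.card := by
      have h1 : N ≤ (U₁ ∪ U₂ ∪ U₃).card := by
        calc N = (univ : Finset G₁).card := by simp [hN]
          _ ≤ _ := card_le_card hsub
      have h2 : (U₁ ∪ U₂ ∪ U₃).card ≤ U₁.card + U₂.card + U₃.card :=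
        le_trans (card_union_le _ _) (by
          have := card_union_le U₁ U₂; omega)
      have := h1.trans h2
      exact_mod_cast this
    rw [hU₁c, hU₂c, hU₃c] at hcard
    linarith
  obtain ⟨z, hz₁, hz₂, hz₃⟩ := hex
  simp only [hU₁, hU₂, hU₃, mem_filter, mem_univ, true_and, not_not] at hz₁ hz₂ hz₃
  rw [← hz₃, ← hz₂, ← hz₁]
  have e : (x * y) * z = x * (y * z) := by group
  rw [e]; group

private lemma dist_bound (f : G₁ → G₂)
    (hB : ((univ.filter fun p : G₁ × G₁ => f (p.1 * p.2) ≠ f p.1 * f p.2).card : ℝ)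
      < 2 / 9 * (Fintype.card G₁ : ℝ) ^ 2) :
    ((univ.filter fun x : G₁ => f x ≠ maj f x).card : ℝ) * (2 / 3 * (Fintype.card G₁ : ℝ))
      ≤ ((univ.filter fun p : G₁ × G₁ => f (p.1 * p.2) ≠ f p.1 * f p.2).card : ℝ) := by
  classical
  set N := Fintype.card G₁ with hN
  set Bad := (univ.filter fun p : G₁ × G₁ => f (p.1 * p.2) ≠ f p.1 * f p.2) with hBad
  set Dset := (univ.filter fun x : G₁ => f x ≠ maj f x) with hD
  -- B = sum over rows
  have hfib : Bad.card = ∑ x : G₁, (Bad.filter fun p => p.1 = x).card :=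
    Finset.card_eq_sum_card_fiberwise (fun p _ => mem_univ p.1)
  have hrow : ∀ x : G₁, (univ.filter fun y : G₁ => f (x * y) ≠ f x * f y).card
      = (Bad.filter fun p => p.1 = x).card := by
    intro x
    apply Finset.card_nbij (fun y => (x, y))
    · intro y hy
      simp only [mem_coe, mem_filter, mem_univ, true_and, hBad] at hy ⊢
      exact ⟨hy, by trivial⟩
    · intro a _ b _ hab; simpa using hab
    · intro p hp
      simp only [Set.mem_image, mem_coe, mem_filter, mem_univ, true_and, hBad] at hp ⊢
      obtain ⟨hp1, hp2⟩ := hp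
      subst hp2
      exact ⟨p.2, hp1, rfl⟩
  have hsubfib : ∀ x ∈ Dset,
      cnt f x (maj f x) ≤ (univ.filter fun y : G₁ => f (x * y) ≠ f x * f y).card := by
    intro x hx
    simp only [hD, mem_filter, mem_univ, true_and] at hx
    apply card_le_card
    intro y hy
    simp only [cnt, mem_filter, mem_univ, true_and] at hy ⊢
    intro heq
    apply hx
    rw [heq, mul_inv_cancel_right] at hy
    exact hy
  have hN0 : (0 : ℝ) ≤ (N : ℝ) := by positivity
  have h1 : (Dset.card : ℝ) * (2 / 3 * (N : ℝ)) = ∑ _x ∈ Dset, (2 / 3 * (N : ℝ)) := by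
    rw [Finset.sum_const, nsmul_eq_mul]
  rw [h1]
  have h2 : ∑ x ∈ Dset, (2 / 3 * (N : ℝ))
      ≤ ∑ x ∈ Dset, ((Bad.filter fun p => p.1 = x).card : ℝ) := by
    apply Finset.sum_le_sum
    intro x hx
    have hlow := (cnt_sum_lower f x hB).le
    have h3 : (cnt f x (maj f x) : ℝ) ≤ ((Bad.filter fun p => p.1 = x).card : ℝ) := by
      rw [← hrow x]; exact_mod_cast hsubfib x hx
    exact hlow.trans h3
  refine h2.trans ?_
  have h4 : ∑ x ∈ Dset, ((Bad.filter fun p => p.1 = x).card : ℝ)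
      ≤ ∑ x : G₁, ((Bad.filter fun p => p.1 = x).card : ℝ) :=
    Finset.sum_le_sum_of_subset_of_nonneg (subset_univ _) (by intros; positivity)
  refine h4.trans ?_
  have h5 : (Bad.card : ℝ) = ∑ x : G₁, ((Bad.filter fun p => p.1 = x).card : ℝ) := by
    rw [hfib]; push_cast; ring
  rw [h5]

private lemma blr_core (f : G₁ → G₂)
    (hB : ((univ.filter fun p : G₁ × G₁ => f (p.1 * p.2) ≠ f p.1 * f p.2).card : ℝ)
      < 2 / 9 * (Fintype.card G₁ : ℝ) ^ 2) :
    ∃ g : G₁ →* G₂,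
      ((univ.filter fun x : G₁ => f x ≠ g x).card : ℝ) * (2 / 3 * (Fintype.card G₁ : ℝ))
        ≤ ((univ.filter fun p : G₁ × G₁ => f (p.1 * p.2) ≠ f p.1 * f p.2).card : ℝ) := by
  exact ⟨MonoidHom.mk' (maj f) (fun a b => maj_mul f hB a b), dist_bound f hB⟩

end Core


private lemma pi_filter_card {α : Type*} [Fintype α] [DecidableEq α] (n : ℕ)
    (Q : α → Prop) [DecidablePred Q] :
    (univ.filter fun s : Fin n → α => ∀ i, Q (s i)).card = (univ.filter Q).card ^ n := by
  have h : (univ.filter fun s : Fin n → α => ∀ i, Q (s i))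
      = Fintype.piFinset (fun _ : Fin n => univ.filter Q) := by
    ext s
    simp [Fintype.mem_piFinset]
  rw [h, Fintype.card_piFinset]
  simp

end Helpers

open Finset in
/-- Repeated BLR linearity test: fix `0 < ε ≤ 1` and `n ≥ 5/ε`, and run `n` independent
tests, each drawing a pair `(x, z)` uniformly from `G₁ × G₁` (i.e. the sample space is
`Fin n → G₁ × G₁` with the uniform distribution).
(a) If `f` is a group homomorphism, all `n` tests pass with probability 1.
(b) If `f` is `ε`-far from the set of all homomorphisms `G₁ →* G₂`, then with probability
at least `2/3` at least one test fails. -/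
theorem blr_repeated_test {G₁ G₂ : Type*} [Group G₁] [Group G₂]
    [Fintype G₁] [Fintype G₂] [DecidableEq G₂]
    (f : G₁ → G₂) (ε : ℝ) (hε0 : 0 < ε) (hε1 : ε ≤ 1) (n : ℕ) (hn : 5 / ε ≤ (n : ℝ)) :
    ((∀ x z : G₁, f (x * z) = f x * f z) →
      ((Finset.univ.filter fun s : Fin n → G₁ × G₁ =>
          ∀ i : Fin n, f ((s i).1 * (s i).2) = f (s i).1 * f (s i).2).card : ℝ)
        / (Fintype.card (Fin n → G₁ × G₁) : ℝ) = 1)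
    ∧ ((∀ g : G₁ →* G₂,
        ε < ((Finset.univ.filter fun x : G₁ => f x ≠ g x).card : ℝ) / (Fintype.card G₁ : ℝ)) →
      (2 : ℝ) / 3 ≤
        ((Finset.univ.filter fun s : Fin n → G₁ × G₁ =>
            ∃ i : Fin n, f ((s i).1 * (s i).2) ≠ f (s i).1 * f (s i).2).card : ℝ)
          / (Fintype.card (Fin n → G₁ × G₁) : ℝ)) := by
  classical
  have hN0 : 0 < (Fintype.card G₁ : ℝ) := by exact_mod_cast Fintype.card_pos
  constructor
  · intro hhom
    have h : (Finset.univ.filter fun s : Fin n → G₁ × G₁ =>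
        ∀ i : Fin n, f ((s i).1 * (s i).2) = f (s i).1 * f (s i).2) = Finset.univ :=
      filter_true_of_mem (fun s _ i => hhom _ _)
    rw [h, Finset.card_univ, div_self]
    exact Nat.cast_ne_zero.mpr Fintype.card_ne_zero
  · intro hfar
    set N := Fintype.card G₁ with hNdef
    set Bad := (univ.filter fun p : G₁ × G₁ => f (p.1 * p.2) ≠ f p.1 * f p.2) with hBaddef
    set P := (univ.filter fun p : G₁ × G₁ => f (p.1 * p.2) = f p.1 * f p.2) with hPdef
    have hPB : P.card + Bad.card = N ^ 2 := by
      have := Finset.card_filter_add_card_filter_not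
        (s := (univ : Finset (G₁ × G₁))) (fun p : G₁ × G₁ => f (p.1 * p.2) = f p.1 * f p.2)
      simpa [Finset.card_univ, Fintype.card_prod, sq, hNdef] using this
    -- lower bound on Bad.card
    have hBlb : 2 / 3 * ε * (N : ℝ) ^ 2 < (Bad.card : ℝ) ∨
        2 / 9 * (N : ℝ) ^ 2 ≤ (Bad.card : ℝ) := by
      by_cases hc : (Bad.card : ℝ) < 2 / 9 * (N : ℝ) ^ 2
      · left
        obtain ⟨g, hg⟩ := blr_core f hc
        have hd := hfar g
        have hD : ε * N < ((univ.filter fun x : G₁ => f x ≠ g x).card : ℝ) := by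
          rw [lt_div_iff₀ hN0] at hd
          linarith
        calc 2 / 3 * ε * (N : ℝ) ^ 2 = (ε * N) * (2 / 3 * N) := by ring
          _ < ((univ.filter fun x : G₁ => f x ≠ g x).card : ℝ) * (2 / 3 * N) := by
              apply mul_lt_mul_of_pos_right hD; positivity
          _ ≤ _ := hg
      · right; linarith
    -- counting on the product space
    have hcardfun : Fintype.card (Fin n → G₁ × G₁) = (N ^ 2) ^ n := by
      rw [Fintype.card_fun, Fintype.card_prod, Fintype.card_fin, sq, hNdef]
    have hall : (Finset.univ.filter fun s : Fin n → G₁ × G₁ =>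
        ∀ i : Fin n, f ((s i).1 * (s i).2) = f (s i).1 * f (s i).2).card = P.card ^ n :=
      pi_filter_card n (fun p : G₁ × G₁ => f (p.1 * p.2) = f p.1 * f p.2)
    have hexcard : (Finset.univ.filter fun s : Fin n → G₁ × G₁ =>
        ∃ i : Fin n, f ((s i).1 * (s i).2) ≠ f (s i).1 * f (s i).2).card
        = (N ^ 2) ^ n - P.card ^ n := by
      have hsplit := Finset.card_filter_add_card_filter_not
        (s := (univ : Finset (Fin n → G₁ × G₁)))
        (fun s : Fin n → G₁ × G₁ => ∀ i : Fin n, f ((s i).1 * (s i).2) = f (s i).1 * f (s i).2)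
      have heq : (Finset.univ.filter fun s : Fin n → G₁ × G₁ =>
          ¬ ∀ i : Fin n, f ((s i).1 * (s i).2) = f (s i).1 * f (s i).2)
          = (Finset.univ.filter fun s : Fin n → G₁ × G₁ =>
            ∃ i : Fin n, f ((s i).1 * (s i).2) ≠ f (s i).1 * f (s i).2) := by
        ext s
        simp [not_forall]
      rw [heq] at hsplit
      rw [hall] at hsplit
      rw [Finset.card_univ] at hsplit
      rw [hcardfun] at hsplit
      exact Nat.eq_sub_of_add_eq' hsplit
    have hPle : P.card ≤ N ^ 2 := Nat.le.intro hPB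
    have hT0 : (0 : ℝ) < ((N : ℝ) ^ 2) ^ n := by positivity
    rw [hexcard, hcardfun]
    have hcast : (((N ^ 2) ^ n - P.card ^ n : ℕ) : ℝ)
        = ((N : ℝ) ^ 2) ^ n - ((P.card : ℝ)) ^ n := by
      rw [Nat.cast_sub (Nat.pow_le_pow_left hPle n)]
      push_cast; ring
    have hcast2 : (((N ^ 2) ^ n : ℕ) : ℝ) = ((N : ℝ) ^ 2) ^ n := by push_cast; ring
    rw [hcast, hcast2]
    -- suffices : pass probability ^ n ≤ 1/3
    have key : ((P.card : ℝ)) ^ n ≤ 1 / 3 * ((N : ℝ) ^ 2) ^ n := by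
      have hPcast : (P.card : ℝ) = (N : ℝ) ^ 2 - Bad.card := by
        have := congrArg (fun k : ℕ => (k : ℝ)) hPB
        push_cast at this; linarith
      have hP0 : (0 : ℝ) ≤ (P.card : ℝ) := by positivity
      have hn5 : 5 ≤ n := by
        have h5 : (5 : ℝ) ≤ 5 / ε := by
          rw [le_div_iff₀ hε0]; nlinarith
        have : (5 : ℝ) ≤ (n : ℝ) := h5.trans hn
        exact_mod_cast this
      have hεn : (5 : ℝ) ≤ ε * n := by
        rw [div_le_iff₀ hε0] at hn; linarith
      rcases hBlb with hB1 | hB2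
      · -- exponential case
        have hq : (P.card : ℝ) ≤ (1 - 2 / 3 * ε) * (N : ℝ) ^ 2 := by
          rw [hPcast]; nlinarith
        have hq0 : (0 : ℝ) ≤ 1 - 2 / 3 * ε := by linarith
        have hstep : ((P.card : ℝ)) ^ n ≤ ((1 - 2 / 3 * ε)) ^ n * ((N : ℝ) ^ 2) ^ n := by
          calc ((P.card : ℝ)) ^ n ≤ ((1 - 2 / 3 * ε) * (N : ℝ) ^ 2) ^ n :=
            pow_le_pow_left₀ hP0 hq n
          _ = _ := by rw [mul_pow]
        refine hstep.trans ?_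
        have hexp1 : (1 - 2 / 3 * ε) ≤ Real.exp (-(2 / 3 * ε)) := by
          have := Real.add_one_le_exp (-(2 / 3 * ε))
          linarith
        have hexp2 : ((1 - 2 / 3 * ε)) ^ n ≤ Real.exp (-(2 / 3 * ε)) ^ n :=
          pow_le_pow_left₀ hq0 hexp1 n
        have hexp3 : Real.exp (-(2 / 3 * ε)) ^ n = Real.exp (-(2 / 3 * (ε * n))) := by
          rw [← Real.exp_nat_mul]; ring_nf
        have hexp4 : Real.exp (-(2 / 3 * (ε * n))) ≤ Real.exp (-(10 / 3 : ℝ)) := by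
          apply Real.exp_le_exp.mpr; linarith
        have hexp5 : Real.exp (-(10 / 3 : ℝ)) ≤ 1 / 3 := by
          rw [Real.exp_neg]
          rw [inv_le_comm₀ (Real.exp_pos _) (by norm_num)]
          have := Real.add_one_le_exp (10 / 3 : ℝ)
          linarith
        have : ((1 - 2 / 3 * ε)) ^ n ≤ 1 / 3 := by
          calc ((1 - 2 / 3 * ε)) ^ n ≤ Real.exp (-(2 / 3 * ε)) ^ n := hexp2
            _ = Real.exp (-(2 / 3 * (ε * n))) := hexp3
            _ ≤ Real.exp (-(10 / 3 : ℝ)) := hexp4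
            _ ≤ 1 / 3 := hexp5
        exact mul_le_mul_of_nonneg_right this hT0.le
      · -- constant case
        have hq : (P.card : ℝ) ≤ (7 / 9) * (N : ℝ) ^ 2 := by
          rw [hPcast]; nlinarith
        have hstep : ((P.card : ℝ)) ^ n ≤ ((7 / 9 : ℝ)) ^ n * ((N : ℝ) ^ 2) ^ n := by
          calc ((P.card : ℝ)) ^ n ≤ ((7 / 9) * (N : ℝ) ^ 2) ^ n :=
            pow_le_pow_left₀ hP0 hq n
          _ = _ := by rw [mul_pow]
        refine hstep.trans ?_
        have h79 : ((7 / 9 : ℝ)) ^ n ≤ ((7 / 9 : ℝ)) ^ 5 :=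
          pow_le_pow_of_le_one (by norm_num) (by norm_num) hn5
        have h795 : ((7 / 9 : ℝ)) ^ 5 ≤ 1 / 3 := by norm_num
        exact mul_le_mul_of_nonneg_right (h79.trans h795) hT0.le
    rw [le_div_iff₀ hT0]
    linarith [key]
end

section
/- Let N be a positive natural number and let g₁, g₂ be simple graphs on the vertex set Fin N that are isomorphic. Let d be any function from simple graphs on Fin N to Bool (a guessing strategy). Draw b uniformly at random from Bool and, independently, π uniformly at random from the permutations of Fin N, and form the graph h = π(g₁) if b is true and h = π(g₂) if b is false. Then the probability that d(h) = b is exactly 1/2. -/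
lemma map_iso_trans {N : ℕ} {g₁ g₂ : SimpleGraph (Fin N)} (e : g₁ ≃g g₂)
    (σ : Equiv.Perm (Fin N)) :
    g₂.map ((e.toEquiv.symm.trans σ).toEmbedding) = g₁.map σ.toEmbedding := by
  ext a b
  simp only [SimpleGraph.map_adj, Equiv.coe_toEmbedding, Equiv.trans_apply]
  constructor
  · rintro ⟨hne, x, y, h, rfl, rfl⟩
    exact ⟨hne, e.symm x, e.symm y, by simpa using e.symm.map_adj_iff.mpr h, rfl, rfl⟩
  · rintro ⟨hne, x, y, h, rfl, rfl⟩
    exact ⟨by simpa using hne, e x, e y, e.map_adj_iff.mpr h, congrArg σ (e.toEquiv.symm_apply_apply x), congrArg σ (e.toEquiv.symm_apply_apply y)⟩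

lemma map_iso_trans' {N : ℕ} {g₁ g₂ : SimpleGraph (Fin N)} (e : g₁ ≃g g₂)
    (σ : Equiv.Perm (Fin N)) :
    g₁.map ((e.toEquiv.trans σ).toEmbedding) = g₂.map σ.toEmbedding := by
  exact map_iso_trans e.symm σ

/-- If `g₁` and `g₂` are isomorphic simple graphs on `Fin N` (`N > 0`), then for any
guessing strategy `d : SimpleGraph (Fin N) → Bool`, drawing `b` uniformly from `Bool`
and, independently, `π` uniformly from `Equiv.Perm (Fin N)`, and forming
`h = π(g₁)` if `b` is true and `h = π(g₂)` if `b` is false, the probability that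
`d h = b` is exactly `1/2`. -/
theorem guessing_isomorphic_half (N : ℕ) (hN : 0 < N)
    (g₁ g₂ : SimpleGraph (Fin N)) (hiso : Nonempty (g₁ ≃g g₂))
    (d : SimpleGraph (Fin N) → Bool) :
    ((Finset.univ.filter fun p : Bool × Equiv.Perm (Fin N) =>
        d (if p.1 then g₁.map p.2.toEmbedding else g₂.map p.2.toEmbedding) = p.1).card : ℝ)
      / (Fintype.card (Bool × Equiv.Perm (Fin N)) : ℝ) = 1 / 2 := by
  obtain ⟨e⟩ := hiso
  classical
  have mem_iff : ∀ p : Bool × Equiv.Perm (Fin N),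
      ((!p.1, if p.1 then e.toEquiv.symm.trans p.2 else e.toEquiv.trans p.2) :
        Bool × Equiv.Perm (Fin N)).1 = !p.1 := fun _ => rfl
  have key : (Finset.univ.filter fun p : Bool × Equiv.Perm (Fin N) =>
        d (if p.1 then g₁.map p.2.toEmbedding else g₂.map p.2.toEmbedding) = p.1).card
      = (Finset.univ.filter fun p : Bool × Equiv.Perm (Fin N) =>
        ¬ (d (if p.1 then g₁.map p.2.toEmbedding else g₂.map p.2.toEmbedding) = p.1)).card := by
    apply Finset.card_bij'
      (fun p _ => ((!p.1, if p.1 then e.toEquiv.symm.trans p.2 else e.toEquiv.trans p.2) :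
        Bool × Equiv.Perm (Fin N)))
      (fun p _ => ((!p.1, if p.1 then e.toEquiv.symm.trans p.2 else e.toEquiv.trans p.2) :
        Bool × Equiv.Perm (Fin N)))
    · rintro ⟨b, σ⟩ hp
      simp only [Finset.mem_filter, Finset.mem_univ, true_and] at hp ⊢
      cases b
      · simp only [Bool.not_false, Bool.false_eq_true, if_false, if_true] at hp ⊢
        rw [map_iso_trans' e]
        simpa using hp
      · simp only [Bool.not_true, Bool.false_eq_true, if_false, if_true] at hp ⊢
        rw [map_iso_trans e]
        simpa using hp
    · rintro ⟨b, σ⟩ hp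
      simp only [Finset.mem_filter, Finset.mem_univ, true_and] at hp ⊢
      cases b
      · simp only [Bool.not_false, Bool.false_eq_true, if_false, if_true] at hp ⊢
        rw [map_iso_trans' e]
        simp at hp
        simp [hp]
      · simp only [Bool.not_true, Bool.false_eq_true, if_false, if_true] at hp ⊢
        rw [map_iso_trans e]
        simp at hp
        simp [hp]
    · rintro ⟨b, σ⟩ _
      cases b <;> simp [← Equiv.trans_assoc]
    · rintro ⟨b, σ⟩ _
      cases b <;> simp [← Equiv.trans_assoc]
  have hsum := Finset.card_filter_add_card_filter_not
    (s := (Finset.univ : Finset (Bool × Equiv.Perm (Fin N))))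
    (p := fun p => d (if p.1 then g₁.map p.2.toEmbedding else g₂.map p.2.toEmbedding) = p.1)
  rw [Finset.card_univ] at hsum
  have hcard : 2 * (Finset.univ.filter fun p : Bool × Equiv.Perm (Fin N) =>
        d (if p.1 then g₁.map p.2.toEmbedding else g₂.map p.2.toEmbedding) = p.1).card
      = Fintype.card (Bool × Equiv.Perm (Fin N)) := by omega
  have hpos : (0:ℝ) < (Fintype.card (Bool × Equiv.Perm (Fin N)) : ℝ) := by
    exact_mod_cast Fintype.card_pos
  rw [div_eq_div_iff hpos.ne' two_pos.ne']
  have := congrArg (fun n : ℕ => (n : ℝ)) hcard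
  push_cast at this
  linarith
end

section
/- Let N be a positive natural number and let g₁, g₂ be simple graphs on the vertex set Fin N that are isomorphic. Fix a natural number n and arbitrary guessing strategies d₁, …, dₙ, each a function from simple graphs on Fin N to Bool. For i = 1, …, n, independently draw bᵢ uniformly from Bool and πᵢ uniformly from the permutations of Fin N, and set hᵢ = πᵢ(g₁) if bᵢ is true and hᵢ = πᵢ(g₂) if bᵢ is false. Then the probability that dᵢ(hᵢ) = bᵢ holds simultaneously for all i = 1, …, n is exactly (1/2)^n. -/
open Finset

lemma coord_card (N : ℕ) (g₁ g₂ : SimpleGraph (Fin N)) (f : Equiv.Perm (Fin N))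
    (key : ∀ π : Equiv.Perm (Fin N), g₂.map π.toEmbedding = g₁.map (π * f).toEmbedding)
    (d : SimpleGraph (Fin N) → Bool) :
    (Finset.univ.filter fun x : Bool × Equiv.Perm (Fin N) =>
      d (if x.1 then g₁.map x.2.toEmbedding else g₂.map x.2.toEmbedding) = x.1).card
      = Fintype.card (Equiv.Perm (Fin N)) := by
  classical
  set G : Bool × Equiv.Perm (Fin N) → SimpleGraph (Fin N) := fun x =>
    if x.1 then g₁.map x.2.toEmbedding else g₂.map x.2.toEmbedding with hG
  set ψ : Bool × Equiv.Perm (Fin N) → Bool × Equiv.Perm (Fin N) := fun x =>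
    (!x.1, if x.1 then x.2 * f⁻¹ else x.2 * f) with hψ
  have key' : ∀ π : Equiv.Perm (Fin N), g₂.map ⇑π = g₁.map (⇑π ∘ ⇑f) := fun π => by
    simpa using key π
  have hGψ : ∀ x, G (ψ x) = G x := by
    rintro ⟨b, π⟩
    cases b with
    | true => simp [hG, hψ, key', Function.comp_assoc]
    | false => simp [hG, hψ, key']
  have hψψ : ∀ x, ψ (ψ x) = x := by
    rintro ⟨b, π⟩
    cases b with
    | true => simp [hψ, inv_mul_cancel_right]
    | false => simp [hψ, mul_inv_cancel_right]
  have hPψ : ∀ x, (d (G (ψ x)) = (ψ x).1) ↔ ¬ (d (G x) = x.1) := by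
    intro x
    rw [hGψ]
    rcases Bool.eq_false_or_eq_true (d (G x)) with h | h <;>
      rcases Bool.eq_false_or_eq_true x.1 with h' | h' <;>
      simp [hψ, h, h']
  have hbij : (Finset.univ.filter fun x => d (G x) = x.1).card
      = (Finset.univ.filter fun x => ¬ (d (G x) = x.1)).card := by
    apply Finset.card_bij' (fun x _ => ψ x) (fun x _ => ψ x)
    · intro x hx
      simp only [Finset.mem_filter, Finset.mem_univ, true_and] at hx ⊢
      intro h
      exact ((hPψ x).1 h) hx
    · intro x hx
      simp only [Finset.mem_filter, Finset.mem_univ, true_and] at hx ⊢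
      rw [hPψ x] at *
      exact hx
    · intro x _; exact hψψ x
    · intro x _; exact hψψ x
  have htot : (Finset.univ.filter fun x => d (G x) = x.1).card
      + (Finset.univ.filter fun x => ¬ (d (G x) = x.1)).card
      = Fintype.card (Bool × Equiv.Perm (Fin N)) :=
    by rw [Finset.card_filter_add_card_filter_not, Finset.card_univ]
  rw [Fintype.card_prod, Fintype.card_bool] at htot
  show (Finset.univ.filter fun x : Bool × Equiv.Perm (Fin N) => d (G x) = x.1).card = _
  omega

/-- If `g₁` and `g₂` are isomorphic simple graphs on `Fin N` (`N > 0`), then for any `n`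
guessing strategies `d i : SimpleGraph (Fin N) → Bool`, drawing `n` independent pairs
`(bᵢ, πᵢ)` with `bᵢ` uniform on `Bool` and `πᵢ` uniform on `Equiv.Perm (Fin N)`
(i.e. the sample space is `Fin n → Bool × Equiv.Perm (Fin N)` with the uniform
distribution), and forming `hᵢ = πᵢ(g₁)` if `bᵢ` is true and `hᵢ = πᵢ(g₂)` otherwise,
the probability that `d i hᵢ = bᵢ` holds simultaneously for all `i` is exactly `(1/2)^n`. -/
theorem guessing_isomorphic_repeated (N : ℕ) (hN : 0 < N)
    (g₁ g₂ : SimpleGraph (Fin N)) (hiso : Nonempty (g₁ ≃g g₂))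
    (n : ℕ) (d : Fin n → SimpleGraph (Fin N) → Bool) :
    ((Finset.univ.filter fun s : Fin n → Bool × Equiv.Perm (Fin N) =>
        ∀ i : Fin n,
          d i (if (s i).1 then g₁.map (s i).2.toEmbedding
               else g₂.map (s i).2.toEmbedding) = (s i).1).card : ℝ)
      / (Fintype.card (Fin n → Bool × Equiv.Perm (Fin N)) : ℝ) = (1 / 2 : ℝ) ^ n := by
  classical
  obtain ⟨e⟩ := hiso
  set f : Equiv.Perm (Fin N) := e.toEquiv with hf
  have key : ∀ π : Equiv.Perm (Fin N),
      g₂.map π.toEmbedding = g₁.map (π * f).toEmbedding := by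
    intro π
    ext x y
    simp only [SimpleGraph.map_adj', Equiv.coe_toEmbedding]
    constructor
    · rintro ⟨hne, a, b, hab, rfl, rfl⟩
      exact ⟨hne, f.symm a, f.symm b, e.symm.map_adj_iff.2 (by simpa using hab),
        by simp [Equiv.Perm.mul_apply], by simp [Equiv.Perm.mul_apply]⟩
    · rintro ⟨hne, a, b, hab, rfl, rfl⟩
      exact ⟨hne, f a, f b, e.map_adj_iff.2 hab, rfl, rfl⟩
  set P : Fin n → Bool × Equiv.Perm (Fin N) → Prop := fun i x =>
    d i (if x.1 then g₁.map x.2.toEmbedding else g₂.map x.2.toEmbedding) = x.1 with hP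
  have hcount : (Finset.univ.filter fun s : Fin n → Bool × Equiv.Perm (Fin N) =>
      ∀ i : Fin n, P i (s i)).card = ∏ i : Fin n, (Finset.univ.filter (P i)).card := by
    rw [← Fintype.card_subtype]
    rw [Fintype.card_congr (Equiv.subtypePiEquivPi (p := P))]
    rw [Fintype.card_pi]
    congr 1
    ext i
    rw [Fintype.card_subtype]
  have hcoord : ∀ i, (Finset.univ.filter (P i)).card
      = Fintype.card (Equiv.Perm (Fin N)) := fun i => coord_card N g₁ g₂ f key (d i)
  have hK : (0 : ℝ) < (Fintype.card (Equiv.Perm (Fin N)) : ℝ) := by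
    exact_mod_cast Fintype.card_pos
  rw [hcount]
  simp only [hcoord, Finset.prod_const, Finset.card_univ, Fintype.card_fin]
  rw [Fintype.card_pi]
  simp only [Fintype.card_prod, Fintype.card_bool, Finset.prod_const, Finset.card_univ,
    Fintype.card_fin]
  push_cast
  rw [div_eq_iff (by positivity), ← mul_pow]
  congr 1
  ring
end
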